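/- Let κ be a field. The κ-algebra homomorphism κ[[a,b,c]]/(a² − b³) → κ[[u,v]] defined by a ↦ u³, b ↦ u², c ↦ v is injective, with image the subring κ[[u², u³, v]]. Moreover, a power series f(u,v) ∈ κ[[u,v]] lies in κ[[u², u³, v]] if and only if its image in κ[[u,v]]/(u²) lies in the image of κ[[v]]. -/

import Mathlib

noncomputable section

/-- The effect of the substitution `a ↦ u³, b ↦ u², c ↦ v` on exponent vectors. -/
def expMap7 (d : Fin 3 →₀ ℕ) : Fin 2 →₀ ℕ :=
  d 0 • Finsupp.single 0 3 + d 1 • Finsupp.single 0 2 + d 2 • Finsupp.single 1 1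

/-- `φ : κ[[a,b,c]] → κ[[u,v]]` is the substitution homomorphism `a ↦ u³`, `b ↦ u²`, `c ↦ v`
precisely when its coefficients are given by the evident formula. -/
def IsSubstHom7 (κ : Type*) [Field κ]
    (φ : MvPowerSeries (Fin 3) κ →ₐ[κ] MvPowerSeries (Fin 2) κ) : Prop :=
  ∀ (f : MvPowerSeries (Fin 3) κ) (e : Fin 2 →₀ ℕ),
    MvPowerSeries.coeff e (φ f) =
      ∑ᶠ d : Fin 3 →₀ ℕ, if expMap7 d = e then MvPowerSeries.coeff d f else 0

/-- The complete monomial subring `κ[[u², u³, v]] ⊆ κ[[u,v]]`. -/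
def monomialSubring7 (κ : Type*) [Field κ] : Set (MvPowerSeries (Fin 2) κ) :=
  {f | ∀ d : Fin 2 →₀ ℕ, MvPowerSeries.coeff d f ≠ 0 →
    d ∈ AddSubmonoid.closure ({Finsupp.single 0 2, Finsupp.single 0 3,
      Finsupp.single 1 1} : Set (Fin 2 →₀ ℕ))}

/-- The set of power series lying in the one-variable subring `κ[[v]] ⊆ κ[[u,v]]`. -/
def onlyV (κ : Type*) [Field κ] : Set (MvPowerSeries (Fin 2) κ) :=
  {g | ∀ d : Fin 2 →₀ ℕ, MvPowerSeries.coeff d g ≠ 0 → d 0 = 0}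

/-! The substitution acts on exponents by `(i, j, k) ↦ (3i + 2j, k)`. Restricted to `i ≤ 1` this is a
bijection onto the exponents `e` with `e₀ ≠ 1`, which are exactly the sums of `(2,0)`, `(3,0)` and
`(0,1)`. Dividing by `a² - b³` with respect to `a` (the quotient is given by a telescoping sum)
reduces every series to one of `a`-degree `< 2`, on which `φ` merely relabels coefficients along
that bijection; this yields both the kernel and the image. Finally, `f ∈ κ[[u², u³, v]]` says that
no monomial `u vᵏ` occurs in `f`, which can be read off modulo `u²`. -/

open Finsupp MvPowerSeries

@[simp] lemma expMap7_apply_zero (d : Fin 3 →₀ ℕ) : expMap7 d 0 = 3 * d 0 + 2 * d 1 := by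
  simp [expMap7, mul_comm]

@[simp] lemma expMap7_apply_one (d : Fin 3 →₀ ℕ) : expMap7 d 1 = d 2 := by
  simp [expMap7]

def expLift7 (e : Fin 2 →₀ ℕ) : Fin 3 →₀ ℕ :=
  equivFunOnFinite.symm ![e 0 % 2, (e 0 - 3 * (e 0 % 2)) / 2, e 1]

lemma expLift7_apply_zero_le (e : Fin 2 →₀ ℕ) : expLift7 e 0 ≤ 1 := by
  simp [expLift7]; omega

lemma expMap7_expLift7 {e : Fin 2 →₀ ℕ} (he : e 0 ≠ 1) : expMap7 (expLift7 e) = e := by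
  ext i; fin_cases i <;> simp [expLift7]; omega

lemma expLift7_expMap7 {d : Fin 3 →₀ ℕ} (hd : d 0 ≤ 1) : expLift7 (expMap7 d) = d := by
  ext i; fin_cases i <;> simp [expLift7] <;> omega

lemma mem_closure_iff_exists_expMap7 {e : Fin 2 →₀ ℕ} :
    e ∈ AddSubmonoid.closure ({single 0 2, single 0 3, single 1 1} : Set (Fin 2 →₀ ℕ)) ↔
      ∃ d, expMap7 d = e := by
  have : ({single 0 2, single 0 3, single 1 1} : Set (Fin 2 →₀ ℕ)) =
      Set.range ![single 0 3, single 0 2, single 1 1] := by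
    simp only [Matrix.range_cons, Matrix.range_empty, Set.union_empty, Set.singleton_union]
    exact Set.insert_comm _ _ _
  rw [this, AddSubmonoid.mem_closure_range_iff]
  simp [expMap7, Finsupp.sum_fintype, Fin.sum_univ_three, eq_comm]

lemma mem_closure_iff_apply_zero_ne_one {e : Fin 2 →₀ ℕ} :
    e ∈ AddSubmonoid.closure ({single 0 2, single 0 3, single 1 1} : Set (Fin 2 →₀ ℕ)) ↔
      e 0 ≠ 1 := by
  rw [mem_closure_iff_exists_expMap7]
  refine ⟨?_, fun he => ⟨_, expMap7_expLift7 he⟩⟩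
  rintro ⟨d, rfl⟩
  simp; omega

lemma mem_monomialSubring7_iff {κ : Type*} [Field κ] {f : MvPowerSeries (Fin 2) κ} :
    f ∈ monomialSubring7 κ ↔ ∀ e : Fin 2 →₀ ℕ, e 0 = 1 → coeff e f = 0 := by
  simp only [monomialSubring7, Set.mem_ofPred_eq, mem_closure_iff_apply_zero_ne_one]
  exact forall_congr' fun e => not_imp_not

section Division

variable {R : Type*} [CommRing R]

/-- `divCoeff f d = ∑_{t ≤ d 1 / 3} coeff (d + t • (2, -3, 0)) f`; shifted by `a²` these are the
coefficients of the quotient of `f` by `a² - b³`, since the sum telescopes against `a² - b³`. -/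
def divCoeff (f : MvPowerSeries (Fin 3) R) (d : Fin 3 →₀ ℕ) : R :=
  coeff d f + if h : 3 ≤ d 1 then divCoeff f (d + single 0 2 - single 1 3) else 0
termination_by d 1
decreasing_by simp; omega

def divQuot (f : MvPowerSeries (Fin 3) R) : MvPowerSeries (Fin 3) R :=
  fun d => divCoeff f (d + single 0 2)

lemma coeff_divQuot (f : MvPowerSeries (Fin 3) R) (d : Fin 3 →₀ ℕ) :
    coeff d (divQuot f) = divCoeff f (d + single 0 2) :=
  rfl

lemma coeff_sub_mul_divQuot {f : MvPowerSeries (Fin 3) R} {d : Fin 3 →₀ ℕ} (hd : 2 ≤ d 0) :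
    coeff d (f - (X 0 ^ 2 - X 1 ^ 3) * divQuot f) = 0 := by
  have h2 : single 0 2 ≤ d := single_le_iff.mpr hd
  rw [map_sub, sub_mul, map_sub, X_pow_eq, X_pow_eq, coeff_monomial_mul, coeff_monomial_mul,
    if_pos h2, one_mul, coeff_divQuot, tsub_add_cancel_of_le h2, divCoeff]
  by_cases h3 : 3 ≤ d 1
  · have : d - single 1 3 + single 0 2 = d + single 0 2 - single 1 3 := by
      ext i; fin_cases i <;> simp
    rw [dif_pos h3, if_pos (single_le_iff.mpr h3), one_mul, coeff_divQuot, this]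
    ring
  · rw [dif_neg h3, if_neg (mt single_le_iff.mp h3)]
    ring

end Division

namespace IsSubstHom7

variable {κ : Type*} [Field κ] {φ : MvPowerSeries (Fin 3) κ →ₐ[κ] MvPowerSeries (Fin 2) κ}

lemma map_monomial (hφ : IsSubstHom7 κ φ) (d : Fin 3 →₀ ℕ) (c : κ) :
    φ (monomial d c) = monomial (expMap7 d) c := by
  classical
  ext e
  rw [hφ, finsum_eq_single _ d fun d' hd' => by rw [coeff_monomial, if_neg hd', ite_self]]
  simp [coeff_monomial, eq_comm]

lemma map_X_sq_sub_X_cube (hφ : IsSubstHom7 κ φ) : φ (X 0 ^ 2 - X 1 ^ 3) = 0 := by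
  have h : expMap7 (single 0 2) = expMap7 (single 1 3) := by
    ext i; fin_cases i <;> simp
  rw [X_pow_eq, X_pow_eq, map_sub, hφ.map_monomial, hφ.map_monomial, h, sub_self]

lemma map_mem_monomialSubring7 (hφ : IsSubstHom7 κ φ) (f : MvPowerSeries (Fin 3) κ) :
    φ f ∈ monomialSubring7 κ := by
  intro e he
  rw [hφ] at he
  obtain ⟨d, hd⟩ : ∃ d : Fin 3 →₀ ℕ, (if expMap7 d = e then coeff d f else 0) ≠ 0 := by
    by_contra! hall
    exact he (finsum_eq_zero_of_forall_eq_zero hall)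
  exact mem_closure_iff_exists_expMap7.mpr ⟨d, by_contra fun h => hd (if_neg h)⟩

lemma coeff_map_of_reduced (hφ : IsSubstHom7 κ φ) {r : MvPowerSeries (Fin 3) κ}
    (hr : ∀ d : Fin 3 →₀ ℕ, 2 ≤ d 0 → coeff d r = 0) {e : Fin 2 →₀ ℕ} (he : e 0 ≠ 1) :
    coeff e (φ r) = coeff (expLift7 e) r := by
  rw [hφ, finsum_eq_single _ (expLift7 e), if_pos (expMap7_expLift7 he)]
  intro d hd
  split_ifs with hde
  · exact hr d (by_contra fun hlt => hd (hde ▸ (expLift7_expMap7 (by omega)).symm))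
  · rfl

lemma eq_zero_of_reduced_of_map_eq_zero (hφ : IsSubstHom7 κ φ) {r : MvPowerSeries (Fin 3) κ}
    (hr : ∀ d : Fin 3 →₀ ℕ, 2 ≤ d 0 → coeff d r = 0) (h0 : φ r = 0) : r = 0 := by
  ext d
  rw [map_zero]
  by_cases hd : 2 ≤ d 0
  · exact hr d hd
  · have he : expMap7 d 0 ≠ 1 := by simp; omega
    rw [← expLift7_expMap7 (by omega : d 0 ≤ 1), ← hφ.coeff_map_of_reduced hr he, h0, map_zero]

lemma ker_eq_span (hφ : IsSubstHom7 κ φ) :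
    RingHom.ker φ.toRingHom = Ideal.span {X 0 ^ 2 - X 1 ^ 3} := by
  refine le_antisymm (fun f hf => ?_)
    ((Ideal.span_singleton_le_iff_mem _).mpr hφ.map_X_sq_sub_X_cube)
  have hf : φ f = 0 := hf
  have hrem : f - (X 0 ^ 2 - X 1 ^ 3) * divQuot f = 0 :=
    hφ.eq_zero_of_reduced_of_map_eq_zero (fun _ => coeff_sub_mul_divQuot)
      (by rw [map_sub, map_mul, hf, hφ.map_X_sq_sub_X_cube, zero_mul, sub_zero])
  exact Ideal.mem_span_singleton'.mpr ⟨divQuot f, by rw [mul_comm]; exact (sub_eq_zero.mp hrem).symm⟩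

lemma range_eq_monomialSubring7 (hφ : IsSubstHom7 κ φ) : Set.range φ = monomialSubring7 κ := by
  refine subset_antisymm (Set.range_subset_iff.mpr hφ.map_mem_monomialSubring7) fun f hf => ?_
  let r : MvPowerSeries (Fin 3) κ := fun d => if d 0 ≤ 1 then coeff (expMap7 d) f else 0
  have hr : ∀ d : Fin 3 →₀ ℕ, 2 ≤ d 0 → coeff d r = 0 := fun d hd => if_neg (by omega)
  refine ⟨r, ext fun e => ?_⟩
  by_cases he : e 0 = 1
  · rw [mem_monomialSubring7_iff.mp (hφ.map_mem_monomialSubring7 r) e he,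
      mem_monomialSubring7_iff.mp hf e he]
  · rw [hφ.coeff_map_of_reduced hr he]
    exact (if_pos (expLift7_apply_zero_le e)).trans (congrArg _ (expMap7_expLift7 he))

end IsSubstHom7

lemma mem_monomialSubring7_iff_exists_sub_mem_span {κ : Type*} [Field κ]
    {f : MvPowerSeries (Fin 2) κ} :
    f ∈ monomialSubring7 κ ↔ ∃ g ∈ onlyV κ, f - g ∈ Ideal.span {X 0 ^ 2} := by
  simp only [mem_monomialSubring7_iff, Ideal.mem_span_singleton, X_pow_dvd_iff, map_sub]
  constructor
  · intro hf
    refine ⟨fun e => if e 0 = 0 then coeff e f else 0,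
      fun e he => by_contra fun h => he (if_neg h), fun e he => ?_⟩
    change coeff e f - (if e 0 = 0 then coeff e f else 0) = 0
    split_ifs with h0
    · exact sub_self _
    · rw [hf e (by omega), sub_zero]
  · rintro ⟨g, hg, hfg⟩ e he
    have hge : coeff e g = 0 := by_contra fun h => absurd (hg e h) (by omega)
    simpa [hge] using hfg e (by omega)

/-- The `κ`-algebra homomorphism `κ[[a,b,c]]/(a² − b³) → κ[[u,v]]` defined by
`a ↦ u³`, `b ↦ u²`, `c ↦ v` is injective (i.e. the kernel of the substitution map is exactly
the ideal `(a² − b³)`), with image the subring `κ[[u², u³, v]]`.  Moreover a power series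
`f(u,v)` lies in `κ[[u², u³, v]]` if and only if its image in `κ[[u,v]]/(u²)` lies in the
image of `κ[[v]]`. -/
theorem substHom7_ker_range_cartesian (κ : Type*) [Field κ]
    (φ : MvPowerSeries (Fin 3) κ →ₐ[κ] MvPowerSeries (Fin 2) κ) (hφ : IsSubstHom7 κ φ) :
    RingHom.ker φ.toRingHom =
      Ideal.span {(MvPowerSeries.X 0) ^ 2 - (MvPowerSeries.X 1) ^ 3} ∧
    Set.range φ = monomialSubring7 κ ∧
    (∀ f : MvPowerSeries (Fin 2) κ, f ∈ monomialSubring7 κ ↔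
      ∃ g ∈ onlyV κ, f - g ∈ Ideal.span {(MvPowerSeries.X 0 : MvPowerSeries (Fin 2) κ) ^ 2}) :=
  ⟨hφ.ker_eq_span, hφ.range_eq_monomialSubring7,
    fun _ => mem_monomialSubring7_iff_exists_sub_mem_span⟩
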